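/- arXiv:2409.13880 — 5 statements merged into one kernel-verified Lean document; each statement's English description precedes it below -/
import Mathlib

section
/- Let d ≥ 1 be an integer, p > 1 and s, w ∈ ℝ. The family ( ω_m^j(p,s,w)^p )_{(j,m) ∈ (ℕ∪{0}) × ℤ^d}, i.e. the family 2^{j p (s − d/p + d/2)} · (1 + 2^{−2j}|m|²)^{p w / 2}, is summable if and only if s < −d/2 and w < −d/p. -/
open scoped ENNReal

/-- The weighted Besov wavelet weight `ω_m^j(p,s,w) = 2^{j(s - d/p + d/2)} (1 + 2^{-2j}|m|²)^{w/2}`. -/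
noncomputable def besovWeight (d : ℕ) (p s w : ℝ) (j : ℕ) (m : Fin d → ℤ) : ℝ :=
  (2 : ℝ) ^ ((j : ℝ) * (s - (d : ℝ) / p + (d : ℝ) / 2)) *
    (1 + (2 : ℝ) ^ (-(2 * (j : ℝ))) * ∑ i, ((m i : ℝ)) ^ 2) ^ (w / 2)

/-!
With `N = 2^j`, the `j`-th slice of the family is `2^{j(p(s + d/2) - d)} ∑_m (1 + |m/N|²)^{pw/2}`.
Writing `m = N q + r` with `r ∈ [0, N)^d` moves `m/N` by less than one unit in each coordinate
away from `q`, so the inner sum is comparable, with constants independent of `j`, to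
`N^d ∑_q (1 + |q|²)^{pw/2}`. The double series therefore converges iff the geometric series
`∑_j 2^{j p (s + d/2)}` and the lattice series `∑_q (1 + |q|²)^{pw/2}` both converge.

The lattice series converges for `pw < -d` by comparison with `∑_q |q|^{pw}` over the lattice
`ℤ^d`. For divergence it suffices, by monotonicity in the exponent, to treat the critical
exponent `-d/2`. There the comparison above reads `∑_q (1 + |q|²)^{-d/2} ≲ ∑_m (N² + |m|²)^{-d/2}`
for every `N ≥ 1`, with a constant independent of `N`, while the right-hand side tends to `0` as
`N → ∞` by dominated convergence.
-/

open Finset Filter Topology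

lemma summable_iff_tsum_ofReal_ne_top {α : Type*} {f : α → ℝ} (hf : ∀ i, 0 ≤ f i) :
    Summable f ↔ ∑' i, ENNReal.ofReal (f i) ≠ ∞ :=
  ⟨Summable.tsum_ofReal_ne_top, fun h =>
    (ENNReal.summable_toReal h).congr fun i => ENNReal.toReal_ofReal (hf i)⟩

lemma ENNReal.tsum_mul_ne_top_iff_of_le_mul {κ : Type*} {a S M : κ → ℝ≥0∞} {K : ℝ≥0∞}
    (hK : K ≠ ∞) (hSM : ∀ j, S j ≤ K * M j) (hMS : ∀ j, M j ≤ K * S j) :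
    ∑' j, a j * S j ≠ ∞ ↔ ∑' j, a j * M j ≠ ∞ := by
  have key {S M : κ → ℝ≥0∞} (h : ∀ j, S j ≤ K * M j) :
      ∑' j, a j * S j ≤ K * ∑' j, a j * M j := by
    rw [← ENNReal.tsum_mul_left]
    exact ENNReal.tsum_le_tsum fun j => (mul_le_mul_right (h j) _).trans_eq (mul_left_comm _ _ _)
  exact ⟨fun hS => ne_top_of_le_ne_top (ENNReal.mul_ne_top hK hS) (key hMS),
    fun hM => ne_top_of_le_ne_top (ENNReal.mul_ne_top hK hM) (key hSM)⟩

lemma Real.rpow_le_rpow_abs_mul_rpow {a b C : ℝ} (α : ℝ) (ha : 0 < a) (hb : 0 < b)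
    (hab : a ≤ C * b) (hba : b ≤ C * a) : a ^ α ≤ C ^ |α| * b ^ α := by
  have hC : 0 < C := pos_of_mul_pos_left (hb.trans_le hba) ha.le
  rcases le_or_gt 0 α with hα | hα
  · rw [abs_of_nonneg hα, ← Real.mul_rpow hC.le hb.le]
    exact Real.rpow_le_rpow ha.le hab hα
  · rw [abs_of_neg hα, Real.rpow_neg hC.le, ← div_eq_inv_mul, ← Real.div_rpow hb.le hC.le]
    exact Real.rpow_le_rpow_of_nonpos (div_pos hb hC) (by rwa [div_le_iff₀' hC]) hα.le

lemma Real.summable_two_rpow_mul_iff {c : ℝ} :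
    Summable (fun j : ℕ => (2 : ℝ) ^ ((j : ℝ) * c)) ↔ c < 0 := by
  simp_rw [mul_comm _ c, Real.rpow_mul_natCast zero_le_two]
  rw [summable_geometric_iff_norm_lt_one, Real.norm_of_nonneg (by positivity),
    Real.rpow_lt_one_iff_of_pos two_pos]
  norm_num

lemma rpow_natCast_sq_add_le {β t : ℝ} (hβ : β ≤ 0) (ht : 0 ≤ t) {N : ℕ} (hN : 1 ≤ N) :
    ((N : ℝ) ^ 2 + t) ^ β ≤ (1 + t) ^ β :=
  Real.rpow_le_rpow_of_nonpos (by positivity)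
    (by gcongr; exact one_le_pow₀ (by exact_mod_cast hN)) hβ

lemma abs_intCast_mul_add_div_sub_le_one (N : ℕ) [NeZero N] (q : ℤ) (r : Fin N) :
    |((q * N + r : ℤ) : ℝ) / N - q| ≤ 1 := by
  have hN : (0 : ℝ) < N := by exact_mod_cast Nat.pos_of_neZero N
  have : ((q * N + r : ℤ) : ℝ) / N - q = r / N := by
    push_cast
    field_simp
    ring
  rw [this, abs_of_nonneg (by positivity), div_le_one hN]
  exact_mod_cast r.is_lt.le

section Lattice

variable {ι : Type*} [Fintype ι]

lemma ENNReal.tsum_int_pi_eq_tsum_sum_fin [DecidableEq ι] (N : ℕ) [NeZero N]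
    (g : (ι → ℤ) → ℝ≥0∞) :
    ∑' m, g m = ∑' q : ι → ℤ, ∑ r : ι → Fin N, g fun i => q i * N + r i := by
  let e := (Equiv.piCongrRight fun _ : ι => Int.divModEquiv N).trans
    (Equiv.arrowProdEquivProdArrow ι (fun _ => ℤ) (fun _ => Fin N))
  rw [← e.symm.tsum_eq, ENNReal.tsum_prod']
  simp_rw [tsum_fintype]
  rfl

lemma ENNReal.natCast_pow_card_mul_eq_sum [DecidableEq ι] (N : ℕ) (c : ℝ≥0∞) :
    (N : ℝ≥0∞) ^ Fintype.card ι * c = ∑ _r : ι → Fin N, c := by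
  simp

lemma one_add_sum_sq_le_of_abs_sub_le {x y : ι → ℝ} (h : ∀ i, |x i - y i| ≤ 1) :
    1 + ∑ i, y i ^ 2 ≤ 2 * (Fintype.card ι + 1) * (1 + ∑ i, x i ^ 2) := by
  have hy : ∑ i, y i ^ 2 ≤ 2 * ∑ i, x i ^ 2 + 2 * Fintype.card ι := by
    calc ∑ i, y i ^ 2 ≤ ∑ i, (2 * x i ^ 2 + 2) := sum_le_sum fun i _ => by
          nlinarith [sq_nonneg (2 * x i - y i), sq_abs (x i - y i), abs_nonneg (x i - y i), h i]
      _ = 2 * ∑ i, x i ^ 2 + 2 * Fintype.card ι := by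
          rw [sum_add_distrib, ← mul_sum, sum_const, card_univ, nsmul_eq_mul]
          ring
  have hx : 0 ≤ ∑ i, x i ^ 2 := by positivity
  nlinarith [mul_nonneg (Nat.cast_nonneg (α := ℝ) (Fintype.card ι)) hx]

lemma rpow_one_add_sum_sq_le_of_abs_sub_le {x y : ι → ℝ} (h : ∀ i, |x i - y i| ≤ 1) (α : ℝ) :
    (1 + ∑ i, y i ^ 2) ^ α ≤ (2 * (Fintype.card ι + 1)) ^ |α| * (1 + ∑ i, x i ^ 2) ^ α :=
  Real.rpow_le_rpow_abs_mul_rpow α (by positivity) (by positivity)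
    (one_add_sum_sq_le_of_abs_sub_le h)
    (one_add_sum_sq_le_of_abs_sub_le fun i => abs_sub_comm (x i) (y i) ▸ h i)

lemma tsum_ofReal_one_add_sum_div_sq_rpow_le [DecidableEq ι] (N : ℕ) [NeZero N] (α : ℝ) :
    ∑' m : ι → ℤ, ENNReal.ofReal ((1 + ∑ i, ((m i : ℝ) / N) ^ 2) ^ α) ≤
      ENNReal.ofReal ((2 * (Fintype.card ι + 1)) ^ |α|) *
        (N ^ Fintype.card ι * ∑' q : ι → ℤ, ENNReal.ofReal ((1 + ∑ i, (q i : ℝ) ^ 2) ^ α)) := by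
  rw [ENNReal.tsum_int_pi_eq_tsum_sum_fin N, ← ENNReal.tsum_mul_left, ← ENNReal.tsum_mul_left]
  refine ENNReal.tsum_le_tsum fun q => ?_
  rw [ENNReal.natCast_pow_card_mul_eq_sum, mul_sum]
  refine sum_le_sum fun r _ => ?_
  rw [← ENNReal.ofReal_mul (by positivity)]
  exact ENNReal.ofReal_le_ofReal (rpow_one_add_sum_sq_le_of_abs_sub_le
    (fun i => by rw [abs_sub_comm]; exact abs_intCast_mul_add_div_sub_le_one N (q i) (r i)) α)

lemma natCast_pow_mul_tsum_ofReal_one_add_sum_sq_rpow_le [DecidableEq ι] (N : ℕ) [NeZero N]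
    (α : ℝ) :
    N ^ Fintype.card ι * ∑' q : ι → ℤ, ENNReal.ofReal ((1 + ∑ i, (q i : ℝ) ^ 2) ^ α) ≤
      ENNReal.ofReal ((2 * (Fintype.card ι + 1)) ^ |α|) *
        ∑' m : ι → ℤ, ENNReal.ofReal ((1 + ∑ i, ((m i : ℝ) / N) ^ 2) ^ α) := by
  rw [← ENNReal.tsum_mul_left]
  conv_rhs => rw [ENNReal.tsum_int_pi_eq_tsum_sum_fin N, ← ENNReal.tsum_mul_left]
  refine ENNReal.tsum_le_tsum fun q => ?_
  rw [ENNReal.natCast_pow_card_mul_eq_sum, mul_sum]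
  refine sum_le_sum fun r _ => ?_
  rw [← ENNReal.ofReal_mul (by positivity)]
  exact ENNReal.ofReal_le_ofReal (rpow_one_add_sum_sq_le_of_abs_sub_le
    (fun i => abs_intCast_mul_add_div_sub_le_one N (q i) (r i)) α)

lemma one_le_tsum_ofReal_one_add_sum_sq_rpow (α : ℝ) :
    1 ≤ ∑' q : ι → ℤ, ENNReal.ofReal ((1 + ∑ i, (q i : ℝ) ^ 2) ^ α) := by
  have h0 := ENNReal.le_tsum
    (f := fun q : ι → ℤ => ENNReal.ofReal ((1 + ∑ i, (q i : ℝ) ^ 2) ^ α)) 0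
  simp only [Pi.zero_apply, Int.cast_zero] at h0
  simpa using h0

lemma one_add_sum_div_sq_rpow_neg_card_div_two {N : ℝ} (hN : 0 < N) (m : ι → ℤ) :
    (1 + ∑ i, ((m i : ℝ) / N) ^ 2) ^ (-(Fintype.card ι : ℝ) / 2) =
      N ^ Fintype.card ι * (N ^ 2 + ∑ i, (m i : ℝ) ^ 2) ^ (-(Fintype.card ι : ℝ) / 2) := by
  have hsum : 1 + ∑ i, ((m i : ℝ) / N) ^ 2 = (N ^ 2 + ∑ i, (m i : ℝ) ^ 2) / N ^ 2 := by
    simp_rw [div_pow, add_div, sum_div, div_self (pow_pos hN 2).ne']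
  have hpow : (N ^ 2) ^ (-(Fintype.card ι : ℝ) / 2) = (N ^ Fintype.card ι)⁻¹ := by
    rw [← Real.rpow_natCast N 2, ← Real.rpow_mul hN.le, ← Real.rpow_natCast,
      ← Real.rpow_neg hN.le]
    congr 1
    push_cast
    ring
  rw [hsum, Real.div_rpow (by positivity) (by positivity), hpow, div_inv_eq_mul, mul_comm]

lemma tsum_ofReal_one_add_sum_sq_rpow_le_ofReal_tsum_natCast_sq_add
    (h : Summable fun m : ι → ℤ => (1 + ∑ i, (m i : ℝ) ^ 2) ^ (-(Fintype.card ι : ℝ) / 2))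
    {N : ℕ} (hN : 1 ≤ N) :
    ∑' q : ι → ℤ, ENNReal.ofReal ((1 + ∑ i, (q i : ℝ) ^ 2) ^ (-(Fintype.card ι : ℝ) / 2)) ≤
      ENNReal.ofReal ((2 * (Fintype.card ι + 1)) ^ |-(Fintype.card ι : ℝ) / 2|) *
        ENNReal.ofReal
          (∑' m : ι → ℤ, ((N : ℝ) ^ 2 + ∑ i, (m i : ℝ) ^ 2) ^ (-(Fintype.card ι : ℝ) / 2)) := by
  classical
  have : NeZero N := ⟨by omega⟩
  have hN0 : (0 : ℝ) < N := by exact_mod_cast hN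
  have hsum : Summable fun m : ι → ℤ =>
      ((N : ℝ) ^ 2 + ∑ i, (m i : ℝ) ^ 2) ^ (-(Fintype.card ι : ℝ) / 2) :=
    h.of_nonneg_of_le (fun m => by positivity) fun m =>
      rpow_natCast_sq_add_le (by simp [neg_div]; positivity) (by positivity) hN
  have hle := natCast_pow_mul_tsum_ofReal_one_add_sum_sq_rpow_le (ι := ι) N
    (-(Fintype.card ι : ℝ) / 2)
  simp_rw [one_add_sum_div_sq_rpow_neg_card_div_two hN0,
    ENNReal.ofReal_mul (pow_nonneg hN0.le (Fintype.card ι)), ENNReal.tsum_mul_left,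
    ← ENNReal.ofReal_tsum_of_nonneg (fun m => by positivity) hsum, ENNReal.ofReal_pow hN0.le,
    ENNReal.ofReal_natCast, mul_left_comm (ENNReal.ofReal _)] at hle
  exact (ENNReal.mul_le_mul_iff_right (by simp; omega) (by simp)).mp hle

lemma tendsto_tsum_natCast_sq_add_sum_sq_rpow {β : ℝ} (hβ : β < 0)
    (h : Summable fun m : ι → ℤ => (1 + ∑ i, (m i : ℝ) ^ 2) ^ β) :
    Tendsto (fun N : ℕ => ∑' m : ι → ℤ, ((N : ℝ) ^ 2 + ∑ i, (m i : ℝ) ^ 2) ^ β) atTop (𝓝 0) := by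
  refine tsum_zero (α := ℝ) (β := ι → ℤ) ▸
    tendsto_tsum_of_dominated_convergence h (fun m => ?_) ?_
  · have := (tendsto_rpow_neg_atTop (neg_pos.2 hβ)).comp <| tendsto_atTop_add_const_right _
      (∑ i, (m i : ℝ) ^ 2) ((tendsto_pow_atTop two_ne_zero).comp tendsto_natCast_atTop_atTop)
    simpa [Function.comp_def] using this
  · filter_upwards [eventually_ge_atTop 1] with N hN m
    rw [Real.norm_of_nonneg (by positivity)]
    exact rpow_natCast_sq_add_le hβ.le (by positivity) hN

lemma not_summable_one_add_sum_sq_rpow_neg_card_div_two [Nonempty ι] :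
    ¬ Summable fun m : ι → ℤ => (1 + ∑ i, (m i : ℝ) ^ 2) ^ (-(Fintype.card ι : ℝ) / 2) := by
  intro h
  have hβ : -(Fintype.card ι : ℝ) / 2 < 0 := by
    have : 0 < Fintype.card ι := Fintype.card_pos
    rw [neg_div, neg_lt_zero]
    positivity
  have := ge_of_tendsto
    (ENNReal.Tendsto.const_mul
      (ENNReal.tendsto_ofReal (tendsto_tsum_natCast_sq_add_sum_sq_rpow hβ h))
      (Or.inr ENNReal.ofReal_ne_top))
    (eventually_atTop.2
      ⟨1, fun N hN => tsum_ofReal_one_add_sum_sq_rpow_le_ofReal_tsum_natCast_sq_add h hN⟩)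
  simpa using (one_le_tsum_ofReal_one_add_sum_sq_rpow _).trans this

lemma summable_norm_toLp_intCast_rpow {r : ℝ} (hr : r < -Fintype.card ι) :
    Summable fun m : ι → ℤ => ‖WithLp.toLp 2 fun i => (m i : ℝ)‖ ^ r := by
  classical
  let b := (EuclideanSpace.basisFun ι ℝ).toBasis
  have h := ZLattice.summable_norm_rpow (Submodule.span ℤ (Set.range b)) r
    (by rwa [ZLattice.rank ℝ, finrank_euclideanSpace])
  let bZ := Module.Basis.span (b.linearIndependent.restrict_scalars' ℤ)
  refine ((bZ.equivFun.symm.toEquiv.summable_iff (f := fun z => ‖z‖ ^ r)).mpr h).congr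
    fun m => ?_
  simp only [Function.comp_apply, LinearEquiv.coe_toEquiv, Module.Basis.equivFun_symm_apply]
  show ‖((∑ i, m i • bZ i : _) : EuclideanSpace ℝ ι)‖ ^ r = _
  simp only [Submodule.coe_sum, Submodule.coe_smul, bZ, Module.Basis.span_apply]
  congr 2
  ext i
  simp [b, Pi.single_apply]

lemma summable_one_add_sum_sq_rpow {α : ℝ} (hα : α < -(Fintype.card ι : ℝ) / 2) :
    Summable fun m : ι → ℤ => (1 + ∑ i, (m i : ℝ) ^ 2) ^ α := by
  have hα0 : α ≤ 0 := hα.le.trans (by simp [neg_div]; positivity)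
  refine (summable_norm_toLp_intCast_rpow (r := 2 * α) (by linarith)).of_norm_bounded_eventually ?_
  filter_upwards [eventually_cofinite_ne 0] with m hm
  have hx : WithLp.toLp 2 (fun i => (m i : ℝ)) ≠ 0 := by
    contrapose! hm
    ext i
    simpa using congrArg (fun x => x i) hm
  have hnorm : ‖WithLp.toLp 2 fun i => (m i : ℝ)‖ ^ 2 = ∑ i, (m i : ℝ) ^ 2 := by
    simp [EuclideanSpace.norm_sq_eq]
  rw [Real.norm_of_nonneg (by positivity), Real.rpow_mul (norm_nonneg _), Real.rpow_two, hnorm]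
  have hpos : 0 < ∑ i, (m i : ℝ) ^ 2 := hnorm ▸ pow_pos (norm_pos_iff.2 hx) 2
  exact Real.rpow_le_rpow_of_nonpos hpos (by linarith) hα0

theorem summable_one_add_sum_sq_rpow_iff [Nonempty ι] {α : ℝ} :
    Summable (fun m : ι → ℤ => (1 + ∑ i, (m i : ℝ) ^ 2) ^ α) ↔
      α < -(Fintype.card ι : ℝ) / 2 := by
  refine ⟨fun h => ?_, summable_one_add_sum_sq_rpow⟩
  by_contra! hα
  refine not_summable_one_add_sum_sq_rpow_neg_card_div_two
    (h.of_nonneg_of_le (fun m => by positivity) fun m => ?_)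
  exact Real.rpow_le_rpow_of_exponent_le (le_add_of_nonneg_right (by positivity)) hα

lemma ENNReal.ofReal_two_rpow_mul_mul_two_pow_pow (A : ℝ) (j : ℕ) :
    ENNReal.ofReal ((2 : ℝ) ^ ((j : ℝ) * A)) * ((2 : ℝ≥0∞) ^ j) ^ Fintype.card ι =
      ENNReal.ofReal ((2 : ℝ) ^ ((j : ℝ) * (A + Fintype.card ι))) := by
  rw [mul_add, Real.rpow_add two_pos, ENNReal.ofReal_mul (by positivity)]
  congr 1
  rw [← Nat.cast_mul, Real.rpow_natCast, ← pow_mul, ENNReal.ofReal_pow zero_le_two]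
  simp

theorem summable_two_rpow_mul_one_add_sum_div_sq_rpow_iff [Nonempty ι] (A α : ℝ) :
    Summable (fun x : ℕ × (ι → ℤ) =>
        (2 : ℝ) ^ ((x.1 : ℝ) * A) * (1 + ∑ i, ((x.2 i : ℝ) / 2 ^ x.1) ^ 2) ^ α) ↔
      A + Fintype.card ι < 0 ∧ α < -(Fintype.card ι : ℝ) / 2 := by
  classical
  set T := ∑' q : ι → ℤ, ENNReal.ofReal ((1 + ∑ i, (q i : ℝ) ^ 2) ^ α)
  set G := ∑' j : ℕ, ENNReal.ofReal ((2 : ℝ) ^ ((j : ℝ) * (A + Fintype.card ι)))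
  have hGT : ∑' j : ℕ, ENNReal.ofReal ((2 : ℝ) ^ ((j : ℝ) * A)) *
      (((2 : ℝ≥0∞) ^ j) ^ Fintype.card ι * T) = G * T := by
    simp_rw [G, ← ENNReal.tsum_mul_right, ← mul_assoc, ENNReal.ofReal_two_rpow_mul_mul_two_pow_pow]
  have hG : G ≠ 0 := by
    refine ne_of_gt (zero_lt_one.trans_le ?_)
    simpa using ENNReal.le_tsum (f := fun j : ℕ =>
      ENNReal.ofReal ((2 : ℝ) ^ ((j : ℝ) * (A + Fintype.card ι)))) 0
  have hT : T ≠ 0 := ne_of_gt (zero_lt_one.trans_le (one_le_tsum_ofReal_one_add_sum_sq_rpow α))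
  rw [summable_iff_tsum_ofReal_ne_top fun x => by positivity, ENNReal.tsum_prod']
  simp_rw [ENNReal.ofReal_mul (Real.rpow_nonneg zero_le_two _), ENNReal.tsum_mul_left]
  rw [ENNReal.tsum_mul_ne_top_iff_of_le_mul ENNReal.ofReal_ne_top
      (fun j => by simpa using tsum_ofReal_one_add_sum_div_sq_rpow_le (ι := ι) (2 ^ j) α)
      (fun j => by
        simpa using natCast_pow_mul_tsum_ofReal_one_add_sum_sq_rpow_le (ι := ι) (2 ^ j) α),
    hGT, Ne, ENNReal.mul_eq_top, ← summable_one_add_sum_sq_rpow_iff,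
    ← Real.summable_two_rpow_mul_iff, summable_iff_tsum_ofReal_ne_top fun j => by positivity,
    summable_iff_tsum_ofReal_ne_top fun q => by positivity]
  tauto

end Lattice

lemma besovWeight_rpow {d : ℕ} {p : ℝ} (hp : p ≠ 0) (s w : ℝ) (j : ℕ) (m : Fin d → ℤ) :
    besovWeight d p s w j m ^ p =
      (2 : ℝ) ^ ((j : ℝ) * (p * (s + d / 2) - d)) *
        (1 + ∑ i, ((m i : ℝ) / 2 ^ j) ^ 2) ^ (p * w / 2) := by
  have hscale : (2 : ℝ) ^ (-(2 * (j : ℝ))) * ∑ i, (m i : ℝ) ^ 2 =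
      ∑ i, ((m i : ℝ) / 2 ^ j) ^ 2 := by
    have : (2 : ℝ) ^ (-(2 * (j : ℝ))) = (((2 : ℝ) ^ j) ^ 2)⁻¹ := by
      rw [Real.rpow_neg zero_le_two, ← pow_mul, ← Real.rpow_natCast]
      push_cast
      ring_nf
    simp_rw [this, mul_sum, div_pow, inv_mul_eq_div]
  rw [besovWeight, hscale, Real.mul_rpow (by positivity) (by positivity),
    ← Real.rpow_mul zero_le_two, ← Real.rpow_mul (by positivity)]
  congr 2
  · field_simp
    ring
  · ring

/-- The family `(ω_m^j(p,s,w)^p)_{(j,m)}` is summable iff `s < -d/2` and `w < -d/p`. -/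
theorem besovWeight_pow_summable_iff (d : ℕ) (hd : 1 ≤ d) (p s w : ℝ) (hp : 1 < p) :
    Summable (fun x : ℕ × (Fin d → ℤ) => besovWeight d p s w x.1 x.2 ^ p) ↔
      s < -(d : ℝ) / 2 ∧ w < -(d : ℝ) / p := by
  have hp0 : 0 < p := by linarith
  have : Nonempty (Fin d) := ⟨⟨0, hd⟩⟩
  simp_rw [besovWeight_rpow hp0.ne']
  rw [summable_two_rpow_mul_one_add_sum_div_sq_rpow_iff, Fintype.card_fin, sub_add_cancel,
    lt_div_iff₀' hp0]
  refine and_congr ⟨fun h => ?_, fun h => ?_⟩ ⟨fun h => ?_, fun h => ?_⟩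
  · linarith [neg_of_mul_neg_right h hp0.le]
  · exact mul_neg_of_pos_of_neg hp0 (by linarith)
  · linarith
  · linarith
end

section
/- Let d ≥ 1 be an integer, let 1 < p₀ ≤ p₁ and s₀, s₁, w₀, w₁ ∈ ℝ, and write ω^{(i)} := ω_m^j(p_i, s_i, w_i). Then the following are equivalent: (i) every real family (μ_{j,m})_{(j,m) ∈ (ℕ∪{0}) × ℤ^d} for which Σ_{j,m} |ω^{(0)} μ_{j,m}|^{p₀} < ∞ also satisfies Σ_{j,m} |ω^{(1)} μ_{j,m}|^{p₁} < ∞; (ii) s₀ − s₁ ≥ d(1/p₀ − 1/p₁) and w₀ ≥ w₁. Moreover, when these hold there exists a constant C > 0 such that (Σ_{j,m} |ω^{(1)} μ_{j,m}|^{p₁})^{1/p₁} ≤ C · (Σ_{j,m} |ω^{(0)} μ_{j,m}|^{p₀})^{1/p₀} for every family (μ_{j,m}). -/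
/-!
When `d (1/p₀ - 1/p₁) ≤ s₀ - s₁` and `w₁ ≤ w₀` the weights compare pointwise, `ω⁽¹⁾ ≤ ω⁽⁰⁾`, so
the embedding (with `C = 1`) follows from the monotonicity `‖·‖_{ℓ^{p₁}} ≤ ‖·‖_{ℓ^{p₀}}` for
`p₀ ≤ p₁`. Conversely, if one condition fails, the ratio `ω⁽⁰⁾ / ω⁽¹⁾` decays geometrically along
an injective sequence of indices: `(j, 0)` when the smoothness condition fails, `(0, 2^k e_i)` when
the decay condition fails. The family equal to `1 / ω⁽¹⁾` along that sequence and `0` elsewhere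
then lies in `b^{p₀}_{s₀,w₀}` but not in `b^{p₁}_{s₁,w₁}`.
-/

open scoped ENNReal

namespace ENNReal

theorem tsum_rpow_rpow_one_div_le {ι : Type*} (a : ι → ℝ≥0∞) {p q : ℝ} (hp : 0 < p)
    (hpq : p ≤ q) : (∑' x, a x ^ q) ^ (1 / q) ≤ (∑' x, a x ^ p) ^ (1 / p) := by
  have hq : 0 < q := hp.trans_le hpq
  set S := ∑' x, a x ^ p
  have ha_le : ∀ x, a x ≤ S ^ (1 / p) := fun x =>
    calc a x = (a x ^ p) ^ (1 / p) := by rw [← rpow_mul, mul_one_div_cancel hp.ne', rpow_one]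
      _ ≤ S ^ (1 / p) := rpow_le_rpow (ENNReal.le_tsum x) (by positivity)
  have hterm : ∀ x, a x ^ q ≤ a x ^ p * S ^ ((q - p) / p) := fun x =>
    calc a x ^ q = a x ^ p * a x ^ (q - p) := by
          rw [← rpow_add_of_nonneg _ _ hp.le (sub_nonneg.2 hpq), add_sub_cancel]
      _ ≤ a x ^ p * (S ^ (1 / p)) ^ (q - p) := by gcongr; exact ha_le x
      _ = a x ^ p * S ^ ((q - p) / p) := by rw [← rpow_mul, one_div_mul_eq_div]
  have hsum : ∑' x, a x ^ q ≤ S ^ (q / p) :=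
    calc ∑' x, a x ^ q ≤ ∑' x, a x ^ p * S ^ ((q - p) / p) := ENNReal.tsum_le_tsum hterm
      _ = S ^ (1 : ℝ) * S ^ ((q - p) / p) := by rw [ENNReal.tsum_mul_right, rpow_one]
      _ = S ^ (q / p) := by
          rw [← rpow_add_of_nonneg _ _ zero_le_one (div_nonneg (sub_nonneg.2 hpq) hp.le)]
          congr 1; field_simp; ring
  calc (∑' x, a x ^ q) ^ (1 / q) ≤ (S ^ (q / p)) ^ (1 / q) := rpow_le_rpow hsum (by positivity)
    _ = S ^ (1 / p) := by rw [← rpow_mul]; congr 1; field_simp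

end ENNReal

section Comparison

variable {ι : Type*} {f g : ι → ℝ} {p q : ℝ}

theorem tsum_ofReal_abs_rpow_one_div_le (hgf : ∀ x, |g x| ≤ |f x|) (hp : 0 < p) (hpq : p ≤ q) :
    (∑' x, ENNReal.ofReal (|g x| ^ q)) ^ (1 / q) ≤
      (∑' x, ENNReal.ofReal (|f x| ^ p)) ^ (1 / p) := by
  have hq : 0 < q := hp.trans_le hpq
  simp only [← ENNReal.ofReal_rpow_of_nonneg (abs_nonneg _) hp.le,
    ← ENNReal.ofReal_rpow_of_nonneg (abs_nonneg _) hq.le]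
  calc (∑' x, ENNReal.ofReal |g x| ^ q) ^ (1 / q)
      ≤ (∑' x, ENNReal.ofReal |f x| ^ q) ^ (1 / q) := by
        gcongr ((∑' x, ?_ ^ q) ^ (1 / q))
        exact ENNReal.ofReal_le_ofReal (hgf _)
    _ ≤ _ := ENNReal.tsum_rpow_rpow_one_div_le _ hp hpq

theorem Summable.abs_rpow_of_abs_le (hf : Summable fun x => |f x| ^ p)
    (hgf : ∀ x, |g x| ≤ |f x|) (hp : 0 < p) (hpq : p ≤ q) : Summable fun x => |g x| ^ q := by
  have hq : 0 < q := hp.trans_le hpq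
  have hfin : ∑' x, ENNReal.ofReal (|g x| ^ q) ≠ ∞ := by
    have hlt := (tsum_ofReal_abs_rpow_one_div_le hgf hp hpq).trans_lt
      (ENNReal.rpow_lt_top_of_nonneg (by positivity) hf.tsum_ofReal_ne_top)
    exact ((ENNReal.rpow_lt_top_iff_of_pos (by positivity)).1 hlt).ne
  simpa [ENNReal.toReal_ofReal (by positivity : 0 ≤ |g _| ^ q)] using ENNReal.summable_toReal hfin

end Comparison

theorem exists_summable_not_summable_of_summable_div {X : Type*} {a b : X → ℝ} {p : ℝ} (q : ℝ)
    (hp : 0 < p) {ι : ℕ → X} (hι : Function.Injective ι) (hb : ∀ k, b (ι k) ≠ 0)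
    (hab : Summable fun k => |a (ι k) / b (ι k)| ^ p) :
    ∃ μ : X → ℝ, Summable (fun x => |a x * μ x| ^ p) ∧ ¬ Summable (fun x => |b x * μ x| ^ q) := by
  refine ⟨Function.extend ι (fun k => (b (ι k))⁻¹) 0, ?_, fun h => ?_⟩
  · refine (hι.summable_iff fun x hx => ?_).1 ?_
    · rw [Function.extend_apply' _ _ _ hx]
      simp [hp.ne']
    · simpa [Function.comp_def, hι.extend_apply, div_eq_mul_inv] using hab
  · have h1 := h.comp_injective hι
    simp only [Function.comp_def, hι.extend_apply, mul_inv_cancel₀ (hb _), abs_one,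
      Real.one_rpow] at h1
    exact one_ne_zero ((summable_const_iff 1).1 h1)

theorem summable_two_rpow_mul_natCast {c : ℝ} (hc : c < 0) :
    Summable fun k : ℕ => (2 : ℝ) ^ (c * k) := by
  simp only [Real.rpow_mul_natCast zero_le_two]
  exact summable_geometric_of_lt_one (by positivity)
    (Real.rpow_lt_one_of_one_lt_of_neg one_lt_two hc)

section BesovWeight

variable {d : ℕ} {p p₀ p₁ s s₀ s₁ w w₀ w₁ : ℝ}

theorem besovWeight_pos (j : ℕ) (m : Fin d → ℤ) : 0 < besovWeight d p s w j m := by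
  unfold besovWeight
  positivity

theorem besovWeight_zero_right (j : ℕ) :
    besovWeight d p s w j 0 = (2 : ℝ) ^ ((j : ℝ) * (s - d / p + d / 2)) := by
  simp [besovWeight]

theorem besovWeight_zero_left (m : Fin d → ℤ) :
    besovWeight d p s w 0 m = (1 + ∑ i, ((m i : ℝ)) ^ 2) ^ (w / 2) := by
  simp [besovWeight]

theorem besovWeight_le_besovWeight (hs : (d : ℝ) * (1 / p₀ - 1 / p₁) ≤ s₀ - s₁) (hw : w₁ ≤ w₀)
    (j : ℕ) (m : Fin d → ℤ) : besovWeight d p₁ s₁ w₁ j m ≤ besovWeight d p₀ s₀ w₀ j m := by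
  have hB : 1 ≤ 1 + (2 : ℝ) ^ (-(2 * (j : ℝ))) * ∑ i, ((m i : ℝ)) ^ 2 :=
    le_add_of_nonneg_right (by positivity)
  unfold besovWeight
  gcongr (2 : ℝ) ^ ((j : ℝ) * ?_) * _ ^ (?_ / 2)
  · exact one_le_two
  · linarith [show (d : ℝ) * (1 / p₀ - 1 / p₁) = d / p₀ - d / p₁ by ring]

theorem abs_besovWeight_mul_le (hs : (d : ℝ) * (1 / p₀ - 1 / p₁) ≤ s₀ - s₁) (hw : w₁ ≤ w₀)
    (j : ℕ) (m : Fin d → ℤ) (c : ℝ) :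
    |besovWeight d p₁ s₁ w₁ j m * c| ≤ |besovWeight d p₀ s₀ w₀ j m * c| := by
  rw [abs_mul, abs_mul, abs_of_pos (besovWeight_pos j m), abs_of_pos (besovWeight_pos j m)]
  exact mul_le_mul_of_nonneg_right (besovWeight_le_besovWeight hs hw j m) (abs_nonneg c)

theorem exists_summable_not_summable_of_lt_smoothness (hp₀ : 0 < p₀)
    (hs : s₀ - s₁ < (d : ℝ) * (1 / p₀ - 1 / p₁)) :
    ∃ μ : ℕ × (Fin d → ℤ) → ℝ,
      Summable (fun x => |besovWeight d p₀ s₀ w₀ x.1 x.2 * μ x| ^ p₀) ∧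
      ¬ Summable (fun x => |besovWeight d p₁ s₁ w₁ x.1 x.2 * μ x| ^ p₁) := by
  refine exists_summable_not_summable_of_summable_div p₁ hp₀ (ι := fun k => (k, 0))
    (fun k l h => (Prod.ext_iff.1 h).1) (fun k => (besovWeight_pos _ _).ne') ?_
  refine (summable_two_rpow_mul_natCast (c := ((s₀ - d / p₀) - (s₁ - d / p₁)) * p₀) ?_).congr
    fun k => ?_
  · have : (d : ℝ) * (1 / p₀ - 1 / p₁) = d / p₀ - d / p₁ := by ring
    nlinarith
  · simp only [besovWeight_zero_right, ← Real.rpow_sub two_pos]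
    rw [abs_of_pos (by positivity), ← Real.rpow_mul zero_le_two]
    ring_nf

theorem exists_summable_not_summable_of_lt_decay (i : Fin d) (hp₀ : 0 < p₀) (hw : w₀ < w₁) :
    ∃ μ : ℕ × (Fin d → ℤ) → ℝ,
      Summable (fun x => |besovWeight d p₀ s₀ w₀ x.1 x.2 * μ x| ^ p₀) ∧
      ¬ Summable (fun x => |besovWeight d p₁ s₁ w₁ x.1 x.2 * μ x| ^ p₁) := by
  refine exists_summable_not_summable_of_summable_div p₁ hp₀
    (ι := fun k => (0, Pi.single i ((2 : ℤ) ^ k))) (fun k l h => ?_)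
    (fun k => (besovWeight_pos _ _).ne') ?_
  · have := congrFun (Prod.ext_iff.1 h).2 i
    simp only [Pi.single_eq_same] at this
    exact Nat.pow_right_injective le_rfl (by exact_mod_cast this)
  refine Summable.of_nonneg_of_le (fun k => by positivity) (fun k => ?_)
    (summable_two_rpow_mul_natCast (c := (w₀ - w₁) * p₀) (by nlinarith))
  have hsum : ∑ i', (((Pi.single i ((2 : ℤ) ^ k) : Fin d → ℤ) i' : ℤ) : ℝ) ^ 2 = 4 ^ k := by
    rw [Finset.sum_eq_single i (fun j _ hj => by simp [hj]) (by simp)]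
    norm_num [← pow_mul, pow_mul']
  simp only [besovWeight_zero_left, hsum, ← Real.rpow_sub (by positivity : (0 : ℝ) < 1 + 4 ^ k)]
  rw [abs_of_pos (by positivity), ← Real.rpow_mul (by positivity)]
  calc (1 + 4 ^ k : ℝ) ^ ((w₀ / 2 - w₁ / 2) * p₀) ≤ (4 ^ k : ℝ) ^ ((w₀ / 2 - w₁ / 2) * p₀) :=
        Real.rpow_le_rpow_of_nonpos (by positivity) (by linarith) (by nlinarith)
    _ = 2 ^ ((w₀ - w₁) * p₀ * k) := by
        rw [show (4 : ℝ) ^ k = 2 ^ (2 * (k : ℝ)) by norm_num [Real.rpow_mul, pow_mul]]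
        rw [← Real.rpow_mul zero_le_two]
        ring_nf

end BesovWeight

/-- Continuous embedding of weighted Besov sequence spaces, case `1 < p₀ ≤ p₁`:
the inclusion `b^{p₀}_{s₀,w₀} ⊆ b^{p₁}_{s₁,w₁}` holds iff `s₀ - s₁ ≥ d(1/p₀ - 1/p₁)` and
`w₀ ≥ w₁`; moreover in that case the inclusion is norm-continuous. -/
theorem besov_embedding_le (d : ℕ) (hd : 1 ≤ d) (p₀ p₁ s₀ s₁ w₀ w₁ : ℝ)
    (hp₀ : 1 < p₀) (hp : p₀ ≤ p₁) :
    ((∀ μ : ℕ × (Fin d → ℤ) → ℝ,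
        Summable (fun x => |besovWeight d p₀ s₀ w₀ x.1 x.2 * μ x| ^ p₀) →
        Summable (fun x => |besovWeight d p₁ s₁ w₁ x.1 x.2 * μ x| ^ p₁)) ↔
      ((d : ℝ) * (1 / p₀ - 1 / p₁) ≤ s₀ - s₁ ∧ w₁ ≤ w₀))
    ∧ (((d : ℝ) * (1 / p₀ - 1 / p₁) ≤ s₀ - s₁ ∧ w₁ ≤ w₀) →
        ∃ C : ℝ, 0 < C ∧ ∀ μ : ℕ × (Fin d → ℤ) → ℝ,
          (∑' x : ℕ × (Fin d → ℤ),
              ENNReal.ofReal (|besovWeight d p₁ s₁ w₁ x.1 x.2 * μ x| ^ p₁)) ^ (1 / p₁)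
            ≤ ENNReal.ofReal C *
              (∑' x : ℕ × (Fin d → ℤ),
                ENNReal.ofReal (|besovWeight d p₀ s₀ w₀ x.1 x.2 * μ x| ^ p₀)) ^ (1 / p₀)) := by
  have hp₀' : 0 < p₀ := by linarith
  have habs (h : (d : ℝ) * (1 / p₀ - 1 / p₁) ≤ s₀ - s₁ ∧ w₁ ≤ w₀) (μ : ℕ × (Fin d → ℤ) → ℝ)
      (x : ℕ × (Fin d → ℤ)) :
      |besovWeight d p₁ s₁ w₁ x.1 x.2 * μ x| ≤ |besovWeight d p₀ s₀ w₀ x.1 x.2 * μ x| :=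
    abs_besovWeight_mul_le h.1 h.2 x.1 x.2 (μ x)
  refine ⟨⟨fun H => ?_, fun h μ hμ => hμ.abs_rpow_of_abs_le (habs h μ) hp₀' hp⟩,
    fun h => ⟨1, one_pos, fun μ => ?_⟩⟩
  · by_contra hfail
    rw [not_and_or, not_le, not_le] at hfail
    obtain ⟨μ, hμ₀, hμ₁⟩ := hfail.elim (exists_summable_not_summable_of_lt_smoothness hp₀')
      (exists_summable_not_summable_of_lt_decay ⟨0, hd⟩ hp₀')
    exact hμ₁ (H μ hμ₀)
  · simpa using tsum_ofReal_abs_rpow_one_div_le (habs h μ) hp₀' hp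
end

section
/- Let ρ be a Borel measure on ℝ with 0 < ρ({β : |β| > 1}) < ∞, and define p_max := sup{ p > 0 : ∫_{|β|>1} |β|^p ρ(dβ) < ∞ } ∈ [0,∞]. If p_max > 0, then for every q ≥ 0 the upper index satisfies τ̄^{(q)}(ρ) = min(p_max, q), and consequently min(p_max, q) ≤ τ̲^{(q)}(ρ) ≤ q. -/
open MeasureTheory Filter
open scoped ENNReal Topology

/-- The tail functional `I_q(ξ) = ∫_{|β|>1} min(ξ^q |β|^q, 1) ρ(dβ)`. -/
noncomputable def tailFunctional (ρ : Measure ℝ) (q ξ : ℝ) : ℝ≥0∞ :=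
  ∫⁻ β in {β : ℝ | 1 < |β|}, ENNReal.ofReal (min (ξ ^ q * |β| ^ q) 1) ∂ρ

/-- The upper index `τ̄^{(q)}(ρ) = inf{τ ≥ 0 : limsup_{ξ→0+} ξ^{-τ} I_q(ξ) = ∞}`,
with `inf ∅ = ∞`. -/
noncomputable def tauUpper (ρ : Measure ℝ) (q : ℝ) : ℝ≥0∞ :=
  sInf {t : ℝ≥0∞ | ∃ τ : ℝ, 0 ≤ τ ∧ t = ENNReal.ofReal τ ∧
    limsup (fun ξ : ℝ => ENNReal.ofReal (ξ ^ (-τ)) * tailFunctional ρ q ξ) (𝓝[>] 0) = ∞}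

/-- The lower index `τ̲^{(q)}(ρ) = inf{τ ≥ 0 : liminf_{ξ→0+} ξ^{-τ} I_q(ξ) = ∞}`,
with `inf ∅ = ∞`. -/
noncomputable def tauLower (ρ : Measure ℝ) (q : ℝ) : ℝ≥0∞ :=
  sInf {t : ℝ≥0∞ | ∃ τ : ℝ, 0 ≤ τ ∧ t = ENNReal.ofReal τ ∧
    liminf (fun ξ : ℝ => ENNReal.ofReal (ξ ^ (-τ)) * tailFunctional ρ q ξ) (𝓝[>] 0) = ∞}

/-- `p_max(ρ) = sup{p > 0 : ∫_{|β|>1} |β|^p ρ(dβ) < ∞}`, with `sup ∅ = 0`, valued in `[0,∞]`. -/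
noncomputable def pMax (ρ : Measure ℝ) : ℝ≥0∞ :=
  sSup {t : ℝ≥0∞ | ∃ p : ℝ, 0 < p ∧ t = ENNReal.ofReal p ∧
    (∫⁻ β in {β : ℝ | 1 < |β|}, ENNReal.ofReal (|β| ^ p) ∂ρ) < ∞}

/-!
For `0 ≤ p ≤ q` one has `min ((ξ|β|)^q, 1) ≤ (ξ|β|)^p`, so a finite `p`-th moment gives
`I_q(ξ) = O(ξ^p)` and hence `τ̄ ≥ min(p_max, q)`. Since `I_q(ξ) ≥ ξ^q ρ{|β| > 1}`, also
`τ̄ ≤ τ̲ ≤ q`. For `τ̄ ≤ p_max`: `I_q(ξ)` dominates the tail mass `ρ{|β| ≥ 1/ξ}` (Markov), so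
`I_q(ξ) = O(ξ^τ)` gives polynomial tail decay of order `τ`, and the layer cake formula then makes
every moment of order `p < τ` finite.
-/

open Set

theorem lintegral_rpow_lt_top_of_meas_le_le_rpow {α : Type*} [MeasurableSpace α]
    {μ : Measure α} [IsFiniteMeasure μ] {f : α → ℝ} (hf_nonneg : 0 ≤ᵐ[μ] f)
    (hf : AEMeasurable f μ) {p τ : ℝ} {C : ℝ≥0∞} (hp : 0 < p) (hpτ : p < τ) (hC : C ≠ ∞)
    (htail : ∀ᶠ t in atTop, μ {x | t ≤ f x} ≤ C * ENNReal.ofReal (t ^ (-τ))) :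
    ∫⁻ x, ENNReal.ofReal (f x ^ p) ∂μ < ∞ := by
  obtain ⟨T, hT⟩ := eventually_atTop.1 (htail.and (eventually_gt_atTop 0))
  have hT0 : 0 < T := (hT T le_rfl).2
  rw [lintegral_rpow_eq_lintegral_meas_le_mul μ hf_nonneg hf hp]
  refine ENNReal.mul_lt_top ENNReal.ofReal_lt_top ?_
  rw [← Ioc_union_Ioi_eq_Ioi hT0.le]
  refine (lintegral_union_le _ _ _).trans_lt (ENNReal.add_lt_top.2 ⟨?_, ?_⟩)
  · have hint : IntegrableOn (fun t : ℝ => t ^ (p - 1)) (Ioc 0 T) :=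
      (intervalIntegrable_iff_integrableOn_Ioc_of_le hT0.le).1
        (intervalIntegral.intervalIntegrable_rpow' (by linarith))
    calc ∫⁻ t in Ioc 0 T, μ {x | t ≤ f x} * ENNReal.ofReal (t ^ (p - 1))
        ≤ ∫⁻ t in Ioc 0 T, μ univ * ENNReal.ofReal (t ^ (p - 1)) :=
          lintegral_mono fun t => mul_le_mul_left (measure_mono (subset_univ _)) _
      _ < ∞ := by
          rw [lintegral_const_mul' _ _ (measure_ne_top μ univ)]
          exact ENNReal.mul_lt_top (measure_lt_top μ univ) hint.setLIntegral_lt_top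
  · have hint : IntegrableOn (fun t : ℝ => t ^ (p - 1 - τ)) (Ioi T) :=
      integrableOn_Ioi_rpow_of_lt (by linarith) hT0
    calc ∫⁻ t in Ioi T, μ {x | t ≤ f x} * ENNReal.ofReal (t ^ (p - 1))
        ≤ ∫⁻ t in Ioi T, C * ENNReal.ofReal (t ^ (p - 1 - τ)) := by
          refine setLIntegral_mono' measurableSet_Ioi fun t ht => ?_
          have ht0 : 0 < t := hT0.trans ht
          calc μ {x | t ≤ f x} * ENNReal.ofReal (t ^ (p - 1))
              ≤ C * ENNReal.ofReal (t ^ (-τ)) * ENNReal.ofReal (t ^ (p - 1)) :=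
                mul_le_mul_left (hT t (le_of_lt ht)).1 _
            _ = C * ENNReal.ofReal (t ^ (p - 1 - τ)) := by
                rw [mul_assoc, ← ENNReal.ofReal_mul (Real.rpow_nonneg ht0.le _),
                  ← Real.rpow_add ht0]
                ring_nf
      _ < ∞ := by
          rw [lintegral_const_mul' _ _ hC]
          exact ENNReal.mul_lt_top hC.lt_top hint.setLIntegral_lt_top

noncomputable def infNonneg (P : ℝ → Prop) : ℝ≥0∞ :=
  sInf {t : ℝ≥0∞ | ∃ τ : ℝ, 0 ≤ τ ∧ t = ENNReal.ofReal τ ∧ P τ}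

section InfNonneg

variable {P Q : ℝ → Prop} {m : ℝ≥0∞}

theorem le_infNonneg (h : ∀ τ, 0 ≤ τ → ENNReal.ofReal τ < m → ¬ P τ) : m ≤ infNonneg P := by
  refine le_sInf ?_
  rintro _ ⟨τ, hτ, rfl, hP⟩
  exact not_lt.1 fun hlt => h τ hτ hlt hP

theorem infNonneg_le (h : ∀ τ, 0 ≤ τ → m < ENNReal.ofReal τ → P τ) : infNonneg P ≤ m := by
  refine le_of_forall_gt_imp_ge_of_dense fun c hmc => ?_
  rcases eq_or_ne c ∞ with rfl | hc
  · exact le_top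
  refine sInf_le ⟨c.toReal, ENNReal.toReal_nonneg, (ENNReal.ofReal_toReal hc).symm, ?_⟩
  exact h _ ENNReal.toReal_nonneg (by rwa [ENNReal.ofReal_toReal hc])

theorem infNonneg_anti (h : ∀ τ, P τ → Q τ) : infNonneg Q ≤ infNonneg P :=
  sInf_le_sInf fun _ ⟨τ, hτ, ht, hP⟩ => ⟨τ, hτ, ht, h τ hP⟩

end InfNonneg

noncomputable def rescaledTail (ρ : Measure ℝ) (q τ ξ : ℝ) : ℝ≥0∞ :=
  ENNReal.ofReal (ξ ^ (-τ)) * tailFunctional ρ q ξ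

noncomputable def tailMoment (ρ : Measure ℝ) (p : ℝ) : ℝ≥0∞ :=
  ∫⁻ β in {β : ℝ | 1 < |β|}, ENNReal.ofReal (|β| ^ p) ∂ρ

theorem ofReal_rpow_mul_ofReal_rpow {x : ℝ} (hx : 0 < x) (a b : ℝ) :
    ENNReal.ofReal (x ^ a) * ENNReal.ofReal (x ^ b) = ENNReal.ofReal (x ^ (a + b)) := by
  rw [← ENNReal.ofReal_mul (Real.rpow_nonneg hx.le _), Real.rpow_add hx]

theorem tailMoment_mono (ρ : Measure ℝ) : Monotone (tailMoment ρ) := fun _ _ h =>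
  setLIntegral_mono (by fun_prop) fun _ hβ =>
    ENNReal.ofReal_le_ofReal (Real.rpow_le_rpow_of_exponent_le hβ.le h)

theorem exists_lt_tailMoment_lt_top {ρ : Measure ℝ} {τ : ℝ}
    (hτ : ENNReal.ofReal τ < pMax ρ) : ∃ p, τ < p ∧ tailMoment ρ p < ∞ := by
  obtain ⟨_, ⟨p, -, rfl, hp⟩, hτp⟩ := lt_sSup_iff.1 hτ
  exact ⟨p, (ENNReal.ofReal_lt_ofReal_iff'.1 hτp).1, hp⟩

theorem ofReal_le_pMax {ρ : Measure ℝ} {τ : ℝ}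
    (h : ∀ p, 0 < p → p < τ → tailMoment ρ p < ∞) : ENNReal.ofReal τ ≤ pMax ρ := by
  refine le_of_forall_lt_imp_le_of_dense fun c hc => ?_
  rcases eq_or_ne c 0 with rfl | hc0
  · exact zero_le
  have hc_top : c ≠ ∞ := hc.ne_top
  have hp : 0 < c.toReal := ENNReal.toReal_pos hc0 hc_top
  refine le_sSup ⟨c.toReal, hp, (ENNReal.ofReal_toReal hc_top).symm, h _ hp ?_⟩
  exact (ENNReal.lt_ofReal_iff_toReal_lt hc_top).1 hc

section TailFunctional

variable {ρ : Measure ℝ} {q : ℝ}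

theorem rpow_mul_measure_le_tailFunctional (hq : 0 ≤ q) {ξ : ℝ} (hξ : 0 < ξ) (hξ1 : ξ ≤ 1) :
    ENNReal.ofReal (ξ ^ q) * ρ {β : ℝ | 1 < |β|} ≤ tailFunctional ρ q ξ := by
  rw [tailFunctional, ← setLIntegral_const]
  refine setLIntegral_mono (by fun_prop) fun β hβ => ENNReal.ofReal_le_ofReal ?_
  refine le_min ?_ (Real.rpow_le_one hξ.le hξ1 hq)
  exact le_mul_of_one_le_right (Real.rpow_nonneg hξ.le q) (Real.one_le_rpow hβ.le hq)

theorem tailFunctional_le_rpow_mul_tailMoment {p ξ : ℝ} (hp : 0 ≤ p) (hpq : p ≤ q)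
    (hξ : 0 < ξ) : tailFunctional ρ q ξ ≤ ENNReal.ofReal (ξ ^ p) * tailMoment ρ p := by
  rw [tailFunctional, tailMoment, ← lintegral_const_mul' _ _ ENNReal.ofReal_ne_top]
  refine setLIntegral_mono (by fun_prop) fun β hβ => ?_
  have hβ0 : 0 < |β| := one_pos.trans hβ
  rw [← ENNReal.ofReal_mul (Real.rpow_nonneg hξ.le p), ← Real.mul_rpow hξ.le hβ0.le,
    ← Real.mul_rpow hξ.le hβ0.le]
  refine ENNReal.ofReal_le_ofReal ?_
  rcases le_or_gt (ξ * |β|) 1 with hle | hlt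
  · exact (min_le_left _ _).trans
      (Real.rpow_le_rpow_of_exponent_ge (mul_pos hξ hβ0) hle hpq)
  · exact (min_le_right _ _).trans (Real.one_le_rpow hlt.le hp)

/-- Markov's inequality for the integrand, which equals `1` on `{t ≤ |β|}` when `ξ = t⁻¹`. -/
theorem restrict_measure_le_tailFunctional (hq : 0 ≤ q) {t : ℝ} (ht : 0 < t) :
    ρ.restrict {β : ℝ | 1 < |β|} {β | t ≤ |β|} ≤ tailFunctional ρ q t⁻¹ := by
  calc ρ.restrict {β : ℝ | 1 < |β|} {β | t ≤ |β|}
      ≤ ρ.restrict {β : ℝ | 1 < |β|}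
          {β | 1 ≤ ENNReal.ofReal (min (t⁻¹ ^ q * |β| ^ q) 1)} := by
        refine measure_mono fun β (hβ : t ≤ |β|) => ?_
        have h1 : 1 ≤ t⁻¹ * |β| := by rwa [le_inv_mul_iff₀ ht, mul_one]
        change 1 ≤ ENNReal.ofReal _
        rw [← Real.mul_rpow (inv_nonneg.2 ht.le) (abs_nonneg β),
          min_eq_right (Real.one_le_rpow h1 hq), ENNReal.ofReal_one]
    _ ≤ tailFunctional ρ q t⁻¹ := by
        rw [tailFunctional]
        simpa only [one_mul] using mul_meas_ge_le_lintegral₀ (by fun_prop) 1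

end TailFunctional

section Asymptotics

variable {ρ : Measure ℝ} {q τ : ℝ}

theorem liminf_rescaledTail_eq_top (h0 : 0 < ρ {β : ℝ | 1 < |β|}) (hq : 0 ≤ q) (hqτ : q < τ) :
    liminf (rescaledTail ρ q τ) (𝓝[>] 0) = ∞ := by
  have hblowup : Tendsto (fun ξ : ℝ => ENNReal.ofReal (ξ ^ (q - τ)) * ρ {β : ℝ | 1 < |β|})
      (𝓝[>] 0) (𝓝 ∞) := by
    have hpow : Tendsto (fun ξ : ℝ => ξ ^ (q - τ)) (𝓝[>] 0) atTop := by
      refine ((tendsto_rpow_atTop (y := τ - q) (by linarith)).comp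
        tendsto_inv_nhdsGT_zero).congr' (eventually_nhdsWithin_of_forall fun ξ (hξ : 0 < ξ) => ?_)
      rw [Function.comp_apply, Real.inv_rpow hξ.le, ← Real.rpow_neg hξ.le, neg_sub]
    have := ENNReal.Tendsto.mul_const (b := ρ {β : ℝ | 1 < |β|})
      (ENNReal.tendsto_ofReal_atTop.comp hpow) (Or.inl ENNReal.top_ne_zero)
    rwa [ENNReal.top_mul h0.ne'] at this
  have hle : ∀ᶠ ξ in 𝓝[>] (0 : ℝ),
      ENNReal.ofReal (ξ ^ (q - τ)) * ρ {β : ℝ | 1 < |β|} ≤ rescaledTail ρ q τ ξ := by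
    filter_upwards [Ioo_mem_nhdsGT one_pos] with ξ ⟨hξ0, hξ1⟩
    rw [sub_eq_neg_add, ← ofReal_rpow_mul_ofReal_rpow hξ0, mul_assoc]
    exact mul_le_mul_right (rpow_mul_measure_le_tailFunctional hq hξ0 hξ1.le) _
  exact top_le_iff.1 (hblowup.liminf_eq ▸ liminf_le_liminf hle)

theorem limsup_rescaledTail_ne_top {p : ℝ} (hp : 0 ≤ p) (hτp : τ < p) (hpq : p ≤ q)
    (hmoment : tailMoment ρ p < ∞) : limsup (rescaledTail ρ q τ) (𝓝[>] 0) ≠ ∞ := by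
  refine ne_top_of_le_ne_top hmoment.ne (limsup_le_of_le (by isBoundedDefault) ?_)
  filter_upwards [Ioo_mem_nhdsGT one_pos] with ξ ⟨hξ0, hξ1⟩
  calc rescaledTail ρ q τ ξ
      ≤ ENNReal.ofReal (ξ ^ (-τ)) * (ENNReal.ofReal (ξ ^ p) * tailMoment ρ p) :=
        mul_le_mul_right (tailFunctional_le_rpow_mul_tailMoment hp hpq hξ0) _
    _ = ENNReal.ofReal (ξ ^ (p - τ)) * tailMoment ρ p := by
        rw [← mul_assoc, ofReal_rpow_mul_ofReal_rpow hξ0, neg_add_eq_sub]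
    _ ≤ tailMoment ρ p := by
        refine mul_le_of_le_one_left zero_le (ENNReal.ofReal_le_one.2 ?_)
        exact Real.rpow_le_one hξ0.le hξ1.le (by linarith)

theorem tailMoment_lt_top_of_limsup_ne_top (h1 : ρ {β : ℝ | 1 < |β|} < ∞) (hq : 0 ≤ q)
    {p : ℝ} (hp : 0 < p) (hpτ : p < τ) (hlimsup : limsup (rescaledTail ρ q τ) (𝓝[>] 0) ≠ ∞) :
    tailMoment ρ p < ∞ := by
  have : IsFiniteMeasure (ρ.restrict {β : ℝ | 1 < |β|}) := isFiniteMeasure_restrict.2 h1.ne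
  set C := limsup (rescaledTail ρ q τ) (𝓝[>] 0) + 1
  have hbounded : ∀ᶠ ξ in 𝓝[>] (0 : ℝ), rescaledTail ρ q τ ξ ≤ C :=
    (eventually_lt_of_limsup_lt (ENNReal.lt_add_right hlimsup one_ne_zero)).mono
      fun _ h => h.le
  refine lintegral_rpow_lt_top_of_meas_le_le_rpow (ae_of_all _ fun β => abs_nonneg β)
    measurable_abs.aemeasurable hp hpτ (ENNReal.add_ne_top.2 ⟨hlimsup, ENNReal.one_ne_top⟩) ?_
  filter_upwards [tendsto_inv_atTop_nhdsGT_zero.eventually hbounded, eventually_gt_atTop 0]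
    with t ht ht0
  calc ρ.restrict {β : ℝ | 1 < |β|} {β | t ≤ |β|}
      ≤ tailFunctional ρ q t⁻¹ := restrict_measure_le_tailFunctional hq ht0
    _ = ENNReal.ofReal (t ^ (-τ)) * rescaledTail ρ q τ t⁻¹ := by
        rw [rescaledTail, ← mul_assoc, Real.inv_rpow ht0.le, ← Real.rpow_neg ht0.le, neg_neg,
          ofReal_rpow_mul_ofReal_rpow ht0, neg_add_cancel, Real.rpow_zero, ENNReal.ofReal_one,
          one_mul]
    _ ≤ C * ENNReal.ofReal (t ^ (-τ)) := by
        rw [mul_comm]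
        exact mul_le_mul_left ht _

end Asymptotics

theorem tauUpper_eq_infNonneg (ρ : Measure ℝ) (q : ℝ) :
    tauUpper ρ q = infNonneg fun τ => limsup (rescaledTail ρ q τ) (𝓝[>] 0) = ∞ := rfl

theorem tauLower_eq_infNonneg (ρ : Measure ℝ) (q : ℝ) :
    tauLower ρ q = infNonneg fun τ => liminf (rescaledTail ρ q τ) (𝓝[>] 0) = ∞ := rfl

theorem tauUpper_le_tauLower (ρ : Measure ℝ) (q : ℝ) : tauUpper ρ q ≤ tauLower ρ q := by
  rw [tauUpper_eq_infNonneg, tauLower_eq_infNonneg]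
  exact infNonneg_anti fun τ h => top_le_iff.1 (h ▸ liminf_le_limsup)

theorem tauUpper_eq_min_pMax_general (ρ : Measure ℝ)
    (h0 : 0 < ρ {β : ℝ | 1 < |β|}) (h1 : ρ {β : ℝ | 1 < |β|} < ∞)
    (q : ℝ) (hq : 0 ≤ q) :
    tauUpper ρ q = min (pMax ρ) (ENNReal.ofReal q) ∧
      min (pMax ρ) (ENNReal.ofReal q) ≤ tauLower ρ q ∧
      tauLower ρ q ≤ ENNReal.ofReal q := by
  have hlimsup_eq_top (τ : ℝ) (hqτ : q < τ) : limsup (rescaledTail ρ q τ) (𝓝[>] 0) = ∞ :=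
    top_le_iff.1 (liminf_rescaledTail_eq_top h0 hq hqτ ▸ liminf_le_limsup)
  have hUpper : tauUpper ρ q = min (pMax ρ) (ENNReal.ofReal q) := by
    refine le_antisymm (infNonneg_le fun τ _ hτ => ?_) (le_infNonneg fun τ hτ hlt => ?_)
    · rcases lt_or_ge q τ with hqτ | hτq
      · exact hlimsup_eq_top τ hqτ
      by_contra hlimsup
      have hτ_le : ENNReal.ofReal τ ≤ pMax ρ := ofReal_le_pMax fun p hp hpτ =>
        tailMoment_lt_top_of_limsup_ne_top h1 hq hp hpτ hlimsup
      exact hτ.not_ge (le_min hτ_le (ENNReal.ofReal_le_ofReal hτq))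
    · obtain ⟨hτ_pMax, hτq⟩ := lt_min_iff.1 hlt
      obtain ⟨p, hτp, hp⟩ := exists_lt_tailMoment_lt_top hτ_pMax
      exact limsup_rescaledTail_ne_top (le_min (hτ.trans hτp.le) hq)
        (lt_min hτp ((ENNReal.ofReal_lt_ofReal_iff_of_nonneg hτ).1 hτq)) (min_le_right p q)
        ((tailMoment_mono ρ (min_le_left p q)).trans_lt hp)
  have hLower : tauLower ρ q ≤ ENNReal.ofReal q := infNonneg_le fun τ _ hτ =>
    liminf_rescaledTail_eq_top h0 hq (ENNReal.ofReal_lt_ofReal_iff'.1 hτ).1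
  exact ⟨hUpper, hUpper ▸ tauUpper_le_tauLower ρ q, hLower⟩

/-- If `p_max > 0`, then `τ̄^{(q)}(ρ) = min(p_max, q)`, and consequently
`min(p_max, q) ≤ τ̲^{(q)}(ρ) ≤ q`. -/
theorem tauUpper_eq_min_pMax (ρ : Measure ℝ)
    (h0 : 0 < ρ {β : ℝ | 1 < |β|}) (h1 : ρ {β : ℝ | 1 < |β|} < ∞)
    (hpMax : 0 < pMax ρ) (q : ℝ) (hq : 0 ≤ q) :
    tauUpper ρ q = min (pMax ρ) (ENNReal.ofReal q) ∧
      min (pMax ρ) (ENNReal.ofReal q) ≤ tauLower ρ q ∧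
      tauLower ρ q ≤ ENNReal.ofReal q :=
  tauUpper_eq_min_pMax_general ρ h0 h1 q hq
end

section
/- Let d ≥ 1 be an integer, p > 2, α ∈ (0,2), and let s, w ∈ ℝ satisfy s < d/p − d/2 and w ≤ 0. Suppose moreover that w ≥ −d/2 or s ≥ −d + d/p. Then there exists a real family (a_{j,m})_{(j,m) ∈ (ℕ∪{0}) × ℤ^d} with Σ_{j,m} |a_{j,m}|^{2α/(2−α)} < ∞ such that Σ_{j,m} |a_{j,m} · ω_m^j(p,s,w)|^{α} = ∞. -/
/-!
With `β = 2α/(2-α)` one has `1/α = 1/β + 1/2`, so by Hölder `a ω ∈ ℓ^α` for every `a ∈ ℓ^β` as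
soon as `ω ∈ ℓ²`. Conversely, a weight admitting infinitely many disjoint finite blocks of
`ℓ²`-mass at least `δ > 0` defeats this: put on the `k`-th block the constant value of `a` that
makes its contribution to `∑ |a ω|^α` equal to `1/(k+1)`; its contribution to `∑ |a|^β` is then
at most `δ^(-β/2) (k+1)^(-(1+β/2))`.

For the Besov weight the blocks are the dyadic shells `2^k ≤ m_i < 2^(k+1)`, which have `2^(dk)`
points, placed at level `j = 0` when `w ≥ -d/2` (there `ω ≳ 2^(kw)`) and at level `j = k` when
`s ≥ -d + d/p` (there `ω ≳ 2^(k(s - d/p + d/2))`); in both cases `2^(dk) ω² ≳ 1`.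
-/

open Function

section Blocks

variable {X : Type*} {F : ℕ → Type*} [∀ k, Fintype (F k)]

noncomputable def blockExtend (ι : (Σ k, F k) → X) (t : ℕ → ℝ) : X → ℝ :=
  extend ι (fun y => t y.1) 0

variable {ι : (Σ k, F k) → X}

lemma summable_rpow_abs_blockExtend (hι : Injective ι) {β : ℝ} (hβ : 0 < β) {t : ℕ → ℝ}
    (ht : Summable fun k => (Fintype.card (F k) : ℝ) * |t k| ^ β) :
    Summable fun x => |blockExtend ι t x| ^ β := by
  have hcomp : (fun x => |blockExtend ι t x| ^ β) = extend ι (fun y => |t y.1| ^ β) 0 := by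
    funext x
    rw [blockExtend, apply_extend (fun r : ℝ => |r| ^ β)]
    congr
    funext x
    simp [Real.zero_rpow hβ.ne']
  rw [hcomp, summable_extend_zero hι, summable_sigma_of_nonneg fun _ => by positivity]
  refine ⟨fun _ => .of_finite, ht.congr fun k => ?_⟩
  simp [tsum_fintype]

lemma summable_card_mul_rpow_of_summable_blockExtend_mul (hι : Injective ι) {α : ℝ}
    (hα : 0 ≤ α) {t c : ℕ → ℝ} {ω : X → ℝ} (hc : ∀ k, 0 ≤ c k) (hω : ∀ y, c y.1 ≤ ω (ι y))
    (h : Summable fun x => |blockExtend ι t x * ω x| ^ α) :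
    Summable fun k => (Fintype.card (F k) : ℝ) * (|t k| * c k) ^ α := by
  have hblocks := ((summable_sigma_of_nonneg fun _ => by simp only [comp_apply]; positivity).mp
    (h.comp_injective hι)).2
  refine .of_nonneg_of_le (fun k => by have := hc k; positivity) (fun k => ?_) hblocks
  rw [tsum_fintype, ← nsmul_eq_mul, ← Finset.card_univ, ← Finset.sum_const]
  refine Finset.sum_le_sum fun v _ => ?_
  simp only [comp_apply, blockExtend, hι.extend_apply, abs_mul]
  have := hc k
  gcongr
  exact (hω ⟨k, v⟩).trans (le_abs_self _)

theorem exists_summable_not_summable_mul_of_blocks (hι : Injective ι) {α β : ℝ} (hα : 0 < α)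
    (hβ : 0 < β) (hαβ : α⁻¹ = β⁻¹ + 2⁻¹) {ω : X → ℝ} {c : ℕ → ℝ} (hc : ∀ k, 0 < c k)
    (hω : ∀ y, c y.1 ≤ ω (ι y)) {δ : ℝ} (hδ : 0 < δ)
    (hmass : ∀ k, δ ≤ Fintype.card (F k) * c k ^ 2) :
    ∃ a : X → ℝ, Summable (fun x => |a x| ^ β) ∧ ¬Summable fun x => |a x * ω x| ^ α := by
  set N : ℕ → ℝ := fun k => Fintype.card (F k)
  have hN k : 0 < N k := pos_of_mul_pos_left (hδ.trans_le (hmass k)) (sq_nonneg _)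
  set t : ℕ → ℝ := fun k => ((k + 1) * N k) ^ (-α⁻¹) * (c k)⁻¹
  have ht k : 0 < t k := by have := hN k; have := hc k; positivity
  have hα_block k : N k * (|t k| * c k) ^ α = ((k : ℝ) + 1)⁻¹ := by
    rw [abs_of_pos (ht k), inv_mul_cancel_right₀ (hc k).ne', ← Real.rpow_mul (by positivity),
      neg_mul, inv_mul_cancel₀ hα.ne', Real.rpow_neg_one, mul_inv, mul_left_comm,
      mul_inv_cancel₀ (hN k).ne', mul_one]
  have hβ_block k :
      N k * |t k| ^ β = (N k * c k ^ 2) ^ (-(β / 2)) * ((k : ℝ) + 1) ^ (-(1 + β / 2)) := by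
    obtain ⟨a, ha⟩ : ∃ a, N k = Real.exp a := ⟨_, (Real.exp_log (hN k)).symm⟩
    obtain ⟨b, hb⟩ : ∃ b, c k = Real.exp b := ⟨_, (Real.exp_log (hc k)).symm⟩
    obtain ⟨e, he⟩ : ∃ e, (k : ℝ) + 1 = Real.exp e := ⟨_, (Real.exp_log k.cast_add_one_pos).symm⟩
    rw [abs_of_pos (ht k)]
    simp only [t, ha, hb, he, ← Real.exp_add, ← Real.exp_neg, ← Real.exp_mul, ← Real.exp_nat_mul]
    congr 1
    have : β * α⁻¹ = 1 + β / 2 := by rw [hαβ]; field_simp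
    linear_combination (-(e + a)) * this
  refine ⟨blockExtend ι t, summable_rpow_abs_blockExtend hι hβ ?_, fun h => ?_⟩
  · have hp : Summable fun k : ℕ => ((k : ℝ) + 1) ^ (-(1 + β / 2)) := by
      simpa using (summable_nat_add_iff 1).mpr
        ((Real.summable_nat_rpow (p := -(1 + β / 2))).mpr (by linarith))
    refine .of_nonneg_of_le (fun k => by have := hN k; positivity) (fun k => ?_)
      (hp.mul_left (δ ^ (-(β / 2))))
    rw [hβ_block]
    exact mul_le_mul_of_nonneg_right (Real.rpow_le_rpow_of_nonpos hδ (hmass k) (by linarith))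
      (by positivity)
  · have hharm : Summable fun k : ℕ => ((k : ℝ) + 1)⁻¹ :=
      (summable_card_mul_rpow_of_summable_blockExtend_mul hι hα.le (fun k => (hc k).le) hω h).congr
        hα_block
    exact Real.not_summable_natCast_inv ((summable_nat_add_iff 1).mp (by exact_mod_cast hharm))

end Blocks

def dyadicShell {d : ℕ} (y : Σ k, Fin d → Fin (2 ^ k)) : Fin d → ℤ :=
  fun i => 2 ^ y.1 + y.2 i

lemma Nat.log_two_pow_add {k v : ℕ} (hv : v < 2 ^ k) : Nat.log 2 (2 ^ k + v) = k :=
  Nat.log_eq_of_pow_le_of_lt_pow (by omega) (by rw [pow_succ]; omega)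

lemma dyadicShell_injective {d : ℕ} (hd : 0 < d) : Injective (dyadicShell (d := d)) := by
  rintro ⟨k, v⟩ ⟨k', v'⟩ h
  have hi i : 2 ^ k + (v i : ℕ) = 2 ^ k' + (v' i : ℕ) := by
    have := congrFun h i
    simp only [dyadicShell] at this
    exact_mod_cast this
  obtain rfl : k = k' := by
    have := hi ⟨0, hd⟩
    rw [← Nat.log_two_pow_add (v ⟨0, hd⟩).isLt, ← Nat.log_two_pow_add (v' ⟨0, hd⟩).isLt, this]
  exact congrArg (Sigma.mk k) (funext fun i => Fin.ext (by simpa using hi i))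

lemma two_rpow_neg_two_mul (k : ℕ) : (2 : ℝ) ^ (-(2 * (k : ℝ))) = ((2 : ℝ) ^ k)⁻¹ ^ 2 := by
  rw [Real.rpow_neg zero_le_two, Real.rpow_mul zero_le_two, Real.rpow_natCast, Real.rpow_two,
    ← pow_mul, mul_comm, pow_mul, inv_pow]

lemma two_rpow_neg_two_mul_mul_sum_sq_dyadicShell_le {d : ℕ} (y : Σ k : ℕ, Fin d → Fin (2 ^ k)) :
    (2 : ℝ) ^ (-(2 * (y.1 : ℝ))) * ∑ i, ((dyadicShell y i : ℤ) : ℝ) ^ 2 ≤ 4 * d := by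
  obtain ⟨k, v⟩ := y
  rw [two_rpow_neg_two_mul, Finset.mul_sum]
  calc ∑ i, ((2 : ℝ) ^ k)⁻¹ ^ 2 * ((dyadicShell ⟨k, v⟩ i : ℤ) : ℝ) ^ 2
        ≤ ∑ _i : Fin d, (4 : ℝ) := by
        refine Finset.sum_le_sum fun i _ => ?_
        have hv : ((v i : ℕ) : ℝ) < 2 ^ k := by exact_mod_cast (v i).isLt
        rw [← mul_pow, dyadicShell]
        push_cast
        rw [show (4 : ℝ) = 2 ^ 2 by norm_num]
        have h2k : (0 : ℝ) < 2 ^ k := by positivity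
        gcongr
        rw [inv_mul_le_iff₀ h2k]
        linarith
    _ = 4 * d := by simp [mul_comm]

lemma sq_le_card_mul_sq_two_rpow {d : ℕ} {θ : ℝ} (hθ : -(d : ℝ) / 2 ≤ θ) (C : ℝ) (k : ℕ) :
    C ^ 2 ≤ (Fintype.card (Fin d → Fin (2 ^ k)) : ℝ) * (C * 2 ^ ((k : ℝ) * θ)) ^ 2 := by
  rw [mul_pow, mul_left_comm]
  refine le_mul_of_one_le_right (sq_nonneg C) ?_
  rw [Fintype.card_fun, Fintype.card_fin, Fintype.card_fin, ← Real.rpow_mul_natCast zero_le_two]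
  push_cast
  rw [← pow_mul, ← Real.rpow_natCast, ← Real.rpow_add zero_lt_two]
  refine Real.one_le_rpow one_le_two ?_
  push_cast
  nlinarith [k.cast_nonneg (α := ℝ)]

section Weight

variable {d : ℕ} {p s w : ℝ}

lemma le_besovWeight_zero_dyadicShell (hw : w ≤ 0) (y : Σ k : ℕ, Fin d → Fin (2 ^ k)) :
    ((1 : ℝ) + 4 * d) ^ (w / 2) * 2 ^ ((y.1 : ℝ) * w) ≤ besovWeight d p s w 0 (dyadicShell y) := by
  set S := ∑ i, ((dyadicShell y i : ℤ) : ℝ) ^ 2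
  have hS : (2 : ℝ) ^ (-(2 * (y.1 : ℝ))) * S ≤ 4 * d :=
    two_rpow_neg_two_mul_mul_sum_sq_dyadicShell_le y
  have hcancel : (2 : ℝ) ^ (2 * (y.1 : ℝ)) * 2 ^ (-(2 * (y.1 : ℝ))) = 1 := by
    rw [← Real.rpow_add zero_lt_two, add_neg_cancel, Real.rpow_zero]
  have hone : (1 : ℝ) ≤ 2 ^ (2 * (y.1 : ℝ)) := Real.one_le_rpow one_le_two (by positivity)
  have hbase : 1 + S ≤ 2 ^ (2 * (y.1 : ℝ)) * (1 + 4 * d) :=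
    calc 1 + S = 1 + 2 ^ (2 * (y.1 : ℝ)) * (2 ^ (-(2 * (y.1 : ℝ))) * S) := by
          rw [← mul_assoc, hcancel, one_mul]
      _ ≤ 2 ^ (2 * (y.1 : ℝ)) + 2 ^ (2 * (y.1 : ℝ)) * (4 * d) :=
          add_le_add hone (mul_le_mul_of_nonneg_left hS (by positivity))
      _ = 2 ^ (2 * (y.1 : ℝ)) * (1 + 4 * d) := by ring
  calc ((1 : ℝ) + 4 * d) ^ (w / 2) * (2 : ℝ) ^ ((y.1 : ℝ) * w)
      = (2 ^ (2 * (y.1 : ℝ)) * (1 + 4 * d)) ^ (w / 2) := by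
        rw [Real.mul_rpow (by positivity) (by positivity), ← Real.rpow_mul zero_le_two, mul_comm]
        ring_nf
    _ ≤ (1 + S) ^ (w / 2) := Real.rpow_le_rpow_of_nonpos (by positivity) hbase (by linarith)
    _ = besovWeight d p s w 0 (dyadicShell y) := by simp [besovWeight, S]

lemma le_besovWeight_dyadicShell (hw : w ≤ 0) (y : Σ k : ℕ, Fin d → Fin (2 ^ k)) :
    ((1 : ℝ) + 4 * d) ^ (w / 2) * 2 ^ ((y.1 : ℝ) * (s - d / p + d / 2)) ≤
      besovWeight d p s w y.1 (dyadicShell y) := by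
  rw [besovWeight, mul_comm]
  refine mul_le_mul_of_nonneg_left (Real.rpow_le_rpow_of_nonpos (by positivity) ?_ (by linarith))
    (by positivity)
  linarith [two_rpow_neg_two_mul_mul_sum_sq_dyadicShell_le y]

end Weight

theorem exists_coeff_not_summable_general (d : ℕ) (hd : 1 ≤ d) (p α s w : ℝ)
    (hα : α ∈ Set.Ioo (0 : ℝ) 2) (hw : w ≤ 0)
    (hout : -(d : ℝ) / 2 ≤ w ∨ -(d : ℝ) + (d : ℝ) / p ≤ s) :
    ∃ a : ℕ × (Fin d → ℤ) → ℝ,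
      Summable (fun x => |a x| ^ (2 * α / (2 - α))) ∧
      ¬ Summable (fun x => |a x * besovWeight d p s w x.1 x.2| ^ α) := by
  obtain ⟨hα0, hα2⟩ := hα
  set C : ℝ := (1 + 4 * d) ^ (w / 2)
  obtain ⟨J, θ, hθ, hJ⟩ : ∃ (J : ℕ → ℕ) (θ : ℝ), -(d : ℝ) / 2 ≤ θ ∧
      ∀ y, C * 2 ^ ((y.1 : ℝ) * θ) ≤ besovWeight d p s w (J y.1) (dyadicShell y) := by
    rcases hout with hw' | hs'
    · exact ⟨fun _ => 0, w, hw', le_besovWeight_zero_dyadicShell hw⟩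
    · exact ⟨id, s - d / p + d / 2, by linarith, le_besovWeight_dyadicShell hw⟩
  have hC : 0 < C := by positivity
  have hinj : Injective fun y : Σ k : ℕ, Fin d → Fin (2 ^ k) => (J y.1, dyadicShell y) :=
    fun _ _ h => dyadicShell_injective hd (congrArg Prod.snd h)
  exact exists_summable_not_summable_mul_of_blocks hinj hα0
    (div_pos (by positivity) (by linarith))
    (by field_simp; ring) (fun k => by positivity) hJ (pow_pos hC 2)
    (sq_le_card_mul_sq_two_rpow hθ C)

/-- For `p > 2`, `α ∈ (0,2)`, and `(s,w) ∈ E_p \ R_p` (i.e. `s < d/p - d/2`, `w ≤ 0`, and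
`w ≥ -d/2` or `s ≥ -d + d/p`), there exists a `2α/(2-α)`-summable coefficient family `a`
such that the family `(|a_{j,m} ω_m^j|^α)` is not summable. -/
theorem exists_coeff_not_summable (d : ℕ) (hd : 1 ≤ d) (p α s w : ℝ)
    (hp : 2 < p) (hα : α ∈ Set.Ioo (0 : ℝ) 2)
    (hs : s < (d : ℝ) / p - (d : ℝ) / 2) (hw : w ≤ 0)
    (hout : -(d : ℝ) / 2 ≤ w ∨ -(d : ℝ) + (d : ℝ) / p ≤ s) :
    ∃ a : ℕ × (Fin d → ℤ) → ℝ,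
      Summable (fun x => |a x| ^ (2 * α / (2 - α))) ∧
      ¬ Summable (fun x => |a x * besovWeight d p s w x.1 x.2| ^ α) :=
  exists_coeff_not_summable_general d hd p α s w hα hw hout
end

section
/- Let ι be a countable set, p ≥ 2, let (ω_n)_{n∈ι} be nonnegative reals and C ≥ 0, and suppose that for every finite family f_1, …, f_N ∈ ℓ²(ι) we have Σ_{i=1}^{N} Σ_{n∈ι} ω_n^p |f_i(n)|^p ≤ C^p · sup_{ y ∈ ℓ²(ι), ‖y‖_{ℓ²} ≤ 1 } Σ_{i=1}^{N} |⟨f_i, y⟩_{ℓ²}|^p. Then Σ_{n∈ι} ω_n^p ≤ C^p. -/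
open scoped ENNReal RealInnerProductSpace

/-- Necessity half of the `p`-summing characterisation (case `p ≥ 2`): if the diagonal
operator `f ↦ (ω_n f(n))_n` from `ℓ²(ι)` satisfies the `p`-summing inequality with
constant `C`, then `Σ_n ω_n^p ≤ C^p`. -/
theorem diagonal_p_summing_necessity (ι : Type*) [Countable ι] (p : ℝ) (hp : 2 ≤ p)
    (ω : ι → ℝ) (hω : ∀ n, 0 ≤ ω n) (C : ℝ) (hC : 0 ≤ C)
    (H : ∀ (N : ℕ) (f : Fin N → lp (fun _ : ι => ℝ) 2),
      (∑ i : Fin N, ∑' n : ι, ENNReal.ofReal (ω n ^ p * |(f i : ∀ _ : ι, ℝ) n| ^ p))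
        ≤ ENNReal.ofReal (C ^ p) *
          ⨆ (y : lp (fun _ : ι => ℝ) 2) (_ : ‖y‖ ≤ 1),
            ∑ i : Fin N, ENNReal.ofReal (|⟪f i, y⟫| ^ p)) :
    (∑' n : ι, ENNReal.ofReal (ω n ^ p)) ≤ ENNReal.ofReal (C ^ p) := by
  classical
  have hp0 : (0:ℝ) < p := lt_of_lt_of_le two_pos hp
  rw [ENNReal.tsum_eq_iSup_sum]
  refine iSup_le fun s => ?_
  set e := s.equivFin with he
  set N := s.card with hN
  set f : Fin N → lp (fun _ : ι => ℝ) 2 :=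
    fun i => lp.single 2 ((e.symm i : ι)) 1 with hf
  have key := H N f
  -- compute the left-hand side of `key`
  have hL : ∀ i : Fin N,
      (∑' n : ι, ENNReal.ofReal (ω n ^ p * |(f i : ∀ _ : ι, ℝ) n| ^ p))
        = ENNReal.ofReal (ω ((e.symm i : ι)) ^ p) := by
    intro i
    rw [tsum_eq_single ((e.symm i : ι)) ?_]
    · have : (f i : ∀ _ : ι, ℝ) ((e.symm i : ι)) = 1 := lp.single_apply_self 2 _ 1
      simp [this, Real.one_rpow]
    · intro n hn
      have : (f i : ∀ _ : ι, ℝ) n = 0 := lp.single_apply_ne 2 _ 1 hn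
      simp [this, Real.zero_rpow (ne_of_gt hp0)]
  have hLsum : (∑ i : Fin N, ∑' n : ι,
      ENNReal.ofReal (ω n ^ p * |(f i : ∀ _ : ι, ℝ) n| ^ p))
        = ∑ n ∈ s, ENNReal.ofReal (ω n ^ p) := by
    rw [Finset.sum_congr rfl fun i _ => hL i]
    rw [Equiv.sum_comp e.symm (fun x : s => ENNReal.ofReal (ω (x : ι) ^ p))]
    rw [Finset.sum_coe_sort s (fun n => ENNReal.ofReal (ω n ^ p))]
  -- bound the supremum by 1
  have hSup : (⨆ (y : lp (fun _ : ι => ℝ) 2) (_ : ‖y‖ ≤ 1),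
      ∑ i : Fin N, ENNReal.ofReal (|⟪f i, y⟫| ^ p)) ≤ 1 := by
    refine iSup₂_le fun y hy => ?_
    have hinner : ∀ i : Fin N, ⟪f i, y⟫ = (y : ∀ _ : ι, ℝ) ((e.symm i : ι)) := by
      intro i
      rw [hf]
      rw [lp.inner_single_left]
      simp
    have habs : ∀ n : ι, |(y : ∀ _ : ι, ℝ) n| ≤ 1 := by
      intro n
      have h1 : ‖(y : ∀ _ : ι, ℝ) n‖ ≤ ‖y‖ := lp.norm_apply_le_norm two_ne_zero y n
      calc |(y : ∀ _ : ι, ℝ) n| = ‖(y : ∀ _ : ι, ℝ) n‖ := (Real.norm_eq_abs _).symm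
        _ ≤ ‖y‖ := h1
        _ ≤ 1 := hy
    have hpow : ∀ n : ι, |(y : ∀ _ : ι, ℝ) n| ^ p ≤ |(y : ∀ _ : ι, ℝ) n| ^ (2:ℝ) := by
      intro n
      rcases eq_or_lt_of_le (abs_nonneg ((y : ∀ _ : ι, ℝ) n)) with h0 | h0
      · rw [← h0, Real.zero_rpow (ne_of_gt hp0), Real.zero_rpow (by norm_num)]
      · exact Real.rpow_le_rpow_of_exponent_ge h0 (habs n) hp
    have hsum2 : ∑ i : Fin N, |(y : ∀ _ : ι, ℝ) ((e.symm i : ι))| ^ (2:ℝ) ≤ 1 := by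
      have := lp.sum_rpow_le_norm_rpow (p := 2) (by norm_num) y s
      have h2 : (2 : ℝ≥0∞).toReal = (2:ℝ) := by norm_num
      rw [h2] at this
      have hrw : ∑ i : Fin N, |(y : ∀ _ : ι, ℝ) ((e.symm i : ι))| ^ (2:ℝ)
          = ∑ n ∈ s, ‖(y : ∀ _ : ι, ℝ) n‖ ^ (2:ℝ) := by
        rw [← Finset.sum_coe_sort s (fun n => ‖(y : ∀ _ : ι, ℝ) n‖ ^ (2:ℝ)),
          ← Equiv.sum_comp e.symm (fun x : s => ‖(y : ∀ _ : ι, ℝ) (x : ι)‖ ^ (2:ℝ))]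
        simp [Real.norm_eq_abs]
      rw [hrw]
      refine this.trans ?_
      calc ‖y‖ ^ (2:ℝ) ≤ (1:ℝ) ^ (2:ℝ) :=
            Real.rpow_le_rpow (norm_nonneg y) hy (by norm_num)
        _ = 1 := Real.one_rpow _
    calc (∑ i : Fin N, ENNReal.ofReal (|⟪f i, y⟫| ^ p))
        = ENNReal.ofReal (∑ i : Fin N, |⟪f i, y⟫| ^ p) :=
          (ENNReal.ofReal_sum_of_nonneg fun i _ =>
            Real.rpow_nonneg (abs_nonneg _) _).symm
      _ ≤ ENNReal.ofReal 1 := by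
          refine ENNReal.ofReal_le_ofReal ?_
          calc ∑ i : Fin N, |⟪f i, y⟫| ^ p
              ≤ ∑ i : Fin N, |(y : ∀ _ : ι, ℝ) ((e.symm i : ι))| ^ (2:ℝ) := by
                refine Finset.sum_le_sum fun i _ => ?_
                rw [hinner i]
                exact hpow _
            _ ≤ 1 := hsum2
      _ = 1 := by simp
  calc (∑ n ∈ s, ENNReal.ofReal (ω n ^ p))
      = ∑ i : Fin N, ∑' n : ι,
          ENNReal.ofReal (ω n ^ p * |(f i : ∀ _ : ι, ℝ) n| ^ p) := hLsum.symm
    _ ≤ ENNReal.ofReal (C ^ p) *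
          ⨆ (y : lp (fun _ : ι => ℝ) 2) (_ : ‖y‖ ≤ 1),
            ∑ i : Fin N, ENNReal.ofReal (|⟪f i, y⟫| ^ p) := key
    _ ≤ ENNReal.ofReal (C ^ p) * 1 := mul_le_mul_right hSup _
    _ = ENNReal.ofReal (C ^ p) := mul_one _
end
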